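/- Perm algebras satisfy the Dong property (the di-replication of the commutative case): if A is a Perm algebra over a field k of characteristic 0 with product μ, and a, b, c are pairwise mutually μ-local formal distributions over A, then for every n ∈ ℕ both ordered pairs (a ∘_{μ,n} b, c) and (c, a ∘_{μ,n} b) are μ-local. -/

import Mathlib

/-!
View a pair of distributions through the two-variable family `F (m, p) = μ (a m) (b p)`:
locality of `(a, b)` says that a power of the difference `T₁ - T₂` of the unit translations
kills `F`. On the triple product `g (r, m, p) = μ (μ (a r) (b m)) (c p)`, locality of `(a, b)`
kills a power of `T₁ - T₂`, and locality of `(a, c)`, read through the Perm identity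
`(xy)z = y(xz)`, kills a power of `T₁ - T₃`. Translations commute, so
`T₂ - T₃ = (T₁ - T₃) - (T₁ - T₂)` is nilpotent on `g` too. The family
`μ ((a ∘ₙ b) m) (c p)` is a combination of translates of `g` restricted to planes on which
`T₂ - T₃` becomes `T₁ - T₂`, hence `(a ∘ₙ b, c)` is local. For `(c, a ∘ₙ b)` the same argument
runs on `μ (c q) (μ (a r) (b m))`, where associativity turns locality of `(c, a)` into
nilpotency of `T₁ - T₂`.
-/

/-- The ordered pair of formal distributions `(a, b)` over `A` is `μ`-local:
there is `N` with `(w - z)^N μ(a(w), b(z)) = 0`, encoded coefficient-wise. -/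
def IsLocalPair {A : Type*} [AddCommGroup A] (μ : A → A → A) (a b : ℤ → A) : Prop :=
  ∃ N : ℕ, ∀ m p : ℤ,
    ∑ s ∈ Finset.range (N + 1),
      ((-1 : ℤ) ^ s * (N.choose s : ℤ)) • μ (a (m + (N : ℤ) - (s : ℤ))) (b (p + (s : ℤ))) = 0

/-- The `n`-th `μ`-product `a ∘_{μ,n} b` of formal distributions,
encoding `Res_{ξ=0} (ξ - w)^n μ(a(ξ), b(w))`. -/
def NthProduct {A : Type*} [AddCommGroup A] (μ : A → A → A) (n : ℕ) (a b : ℤ → A) : ℤ → A :=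
  fun m => ∑ j ∈ Finset.range (n + 1),
    ((-1 : ℤ) ^ j * (n.choose j : ℤ)) • μ (a ((n : ℤ) - (j : ℤ))) (b (m + (j : ℤ)))

/-- Three formal distributions `a, b, c` are pairwise mutually `μ`-local. -/
def PairwiseMutuallyLocal {A : Type*} [AddCommGroup A] (μ : A → A → A) (a b c : ℤ → A) : Prop :=
  IsLocalPair μ a b ∧ IsLocalPair μ b a ∧ IsLocalPair μ a c ∧ IsLocalPair μ c a ∧
    IsLocalPair μ b c ∧ IsLocalPair μ c b

/-- `μ : A → A → A` is `k`-bilinear. -/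
def IsBilinear (k : Type*) [Field k] {A : Type*} [AddCommGroup A] [Module k A]
    (μ : A → A → A) : Prop :=
  (∀ x y z : A, μ (x + y) z = μ x z + μ y z) ∧
    (∀ x y z : A, μ x (y + z) = μ x y + μ x z) ∧
    (∀ (r : k) (x y : A), μ (r • x) y = r • μ x y) ∧
    (∀ (r : k) (x y : A), μ x (r • y) = r • μ x y)

open Finset

theorem Module.End.add_pow_apply_eq_zero_of_commute {R M : Type*} [Semiring R] [AddCommMonoid M]
    [Module R M] {X Y : Module.End R M} {f : M} {m n : ℕ} (h : Commute X Y)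
    (hX : (X ^ m) f = 0) (hY : (Y ^ n) f = 0) : ((X + Y) ^ (m + n - 1)) f = 0 :=
  -- the operators killing `f` form a left ideal
  Ideal.add_pow_add_pred_mem_of_pow_mem_of_commute
    (LinearMap.ker (LinearMap.toSpanSingleton (Module.End R M) M f)) hX hY h

theorem Module.End.sub_pow_apply_eq_zero_of_commute {R M : Type*} [Semiring R] [AddCommGroup M]
    [Module R M] {X Y : Module.End R M} {f : M} {m n : ℕ} (h : Commute X Y)
    (hX : (X ^ m) f = 0) (hY : (Y ^ n) f = 0) : ((X - Y) ^ (m + n - 1)) f = 0 := by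
  rw [sub_eq_add_neg]
  refine Module.End.add_pow_apply_eq_zero_of_commute (Commute.neg_right h) hX ?_
  rw [neg_pow, Module.End.mul_apply, hY, map_zero]

namespace FormalDistribution

variable {ι κ A B : Type*} [AddCommGroup A] [AddCommGroup B]

def pullback (π : ι → κ) (L : ι → A →+ B) : (κ → A) →ₗ[ℤ] ι → B where
  toFun F x := L x (F (π x))
  map_add' F G := by ext x; simp
  map_smul' n F := by ext x; simp

@[simp]
theorem pullback_apply (π : ι → κ) (L : ι → A →+ B) (F : κ → A) (x : ι) :
    pullback π L F x = L x (F (π x)) := rfl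

variable [AddCommGroup ι] [AddCommGroup κ]

def shift (v : ι) : Module.End ℤ (ι → A) := LinearMap.funLeft ℤ A (· + v)

@[simp]
theorem shift_apply (v : ι) (f : ι → A) (x : ι) : shift (A := A) v f x = f (x + v) := rfl

theorem shift_mul_shift (v w : ι) : shift (A := A) v * shift w = shift (v + w) := by
  ext f x
  simp [Module.End.mul_apply, add_assoc]

theorem shift_pow (v : ι) (k : ℕ) : shift (A := A) v ^ k = shift (k • v) := by
  induction k with
  | zero => ext; simp
  | succ k ih => rw [pow_succ, ih, shift_mul_shift, succ_nsmul]

theorem commute_shift (v w : ι) : Commute (shift (A := A) v) (shift w) := by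
  rw [Commute, SemiconjBy, shift_mul_shift, shift_mul_shift, add_comm]

theorem commute_shift_sub_shift (v v' w w' : ι) :
    Commute (shift (A := A) v - shift v') (shift w - shift w') :=
  ((commute_shift v w).sub_right (commute_shift v w')).sub_left
    ((commute_shift v' w).sub_right (commute_shift v' w'))

theorem shift_sub_shift_pow_apply (v w : ι) (N : ℕ) (f : ι → A) (x : ι) :
    ((shift v - shift w : Module.End ℤ (ι → A)) ^ N) f x = ∑ s ∈ range (N + 1),
      ((-1 : ℤ) ^ s * (N.choose s : ℤ)) • f (x + (N - s) • v + s • w) := by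
  rw [sub_eq_neg_add, ((commute_shift (A := A) w v).neg_left).add_pow, LinearMap.sum_apply,
    Finset.sum_apply]
  refine sum_congr rfl fun s _ => ?_
  have hsign : (-1 : Module.End ℤ (ι → A)) ^ s = ((-1 : ℤ) ^ s : ℤ) := by push_cast; rfl
  rw [neg_pow, hsign]
  simp only [shift_pow, Module.End.mul_apply, Module.End.intCast_apply,
    Module.End.natCast_apply, Pi.smul_apply, shift_apply, mul_smul, natCast_zsmul]
  rw [add_right_comm]

theorem shift_sub_shift_pow_apply_prod (N : ℕ) (F : ℤ × ℤ → A) (m p : ℤ) :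
    ((shift (1, 0) - shift (0, 1) : Module.End ℤ (ℤ × ℤ → A)) ^ N) F (m, p) =
      ∑ s ∈ range (N + 1), ((-1 : ℤ) ^ s * (N.choose s : ℤ)) • F (m + N - s, p + s) := by
  rw [shift_sub_shift_pow_apply]
  refine sum_congr rfl fun s hs => ?_
  have hsN : s ≤ N := Nat.lt_succ_iff.mp (mem_range.mp hs)
  simp [Nat.cast_sub hsN, add_sub_assoc]

theorem isLocalPair_iff (μ : A → A → A) (a b : ℤ → A) :
    IsLocalPair μ a b ↔ ∃ N : ℕ, ((shift (1, 0) - shift (0, 1) : Module.End ℤ (ℤ × ℤ → A)) ^ N)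
      (fun x => μ (a x.1) (b x.2)) = 0 := by
  simp only [IsLocalPair, funext_iff, Prod.forall, shift_sub_shift_pow_apply_prod, Pi.zero_apply]

theorem shift_comp_pullback {π : ι → κ} {L : ι → A →+ B} {v : ι} {u : κ}
    (hπ : ∀ x, π (x + v) = π x + u) (hL : ∀ x, L (x + v) = L x) :
    (shift v).comp (pullback π L) = (pullback π L).comp (shift u) := by
  ext F x
  simp [hπ, hL]

theorem shift_sub_shift_pow_pullback_eq_zero {π : ι → κ} {L : ι → A →+ B} {v v' : ι} {u u' : κ}
    (hπ : ∀ x, π (x + v) = π x + u) (hπ' : ∀ x, π (x + v') = π x + u')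
    (hL : ∀ x, L (x + v) = L x) (hL' : ∀ x, L (x + v') = L x) {N : ℕ} {F : κ → A}
    (hF : ((shift u - shift u' : Module.End ℤ (κ → A)) ^ N) F = 0) :
    ((shift v - shift v' : Module.End ℤ (ι → B)) ^ N) (pullback π L F) = 0 := by
  have hcomm : (shift v - shift v' : Module.End ℤ (ι → B)).comp (pullback π L) =
      (pullback π L).comp (shift u - shift u') := by
    rw [LinearMap.sub_comp, LinearMap.comp_sub, shift_comp_pullback hπ hL,
      shift_comp_pullback hπ' hL']
  rw [← LinearMap.comp_apply, Module.End.commute_pow_left_of_commute hcomm, LinearMap.comp_apply,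
    hF, map_zero]

section Product

variable {μ : A → A → A}

def mulRight (hl : ∀ x y z : A, μ (x + y) z = μ x z + μ y z) (z : A) : A →+ A :=
  AddMonoidHom.mk' (μ · z) (hl · · z)

def mulLeft (hr : ∀ x y z : A, μ x (y + z) = μ x y + μ x z) (x : A) : A →+ A :=
  AddMonoidHom.mk' (μ x ·) (hr x)

@[simp]
theorem mulRight_apply (hl : ∀ x y z : A, μ (x + y) z = μ x z + μ y z) (z x : A) :
    mulRight hl z x = μ x z := rfl

@[simp]
theorem mulLeft_apply (hr : ∀ x y z : A, μ x (y + z) = μ x y + μ x z) (x y : A) :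
    mulLeft hr x y = μ x y := rfl

theorem nthProduct_mul_eq_sum_pullback (hl : ∀ x y z : A, μ (x + y) z = μ x z + μ y z)
    (n : ℕ) (a b c : ℤ → A) :
    (fun x : ℤ × ℤ => μ (NthProduct μ n a b x.1) (c x.2)) =
      ∑ j ∈ range (n + 1), ((-1 : ℤ) ^ j * (n.choose j : ℤ)) •
        pullback (fun x : ℤ × ℤ => ((n - j : ℤ), x.1 + j, x.2)) (fun _ => AddMonoidHom.id A)
          (fun y => μ (μ (a y.1) (b y.2.1)) (c y.2.2)) := by
  funext x
  change mulRight hl (c x.2) (NthProduct μ n a b x.1) = _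
  simp [NthProduct, map_sum, map_zsmul, Finset.sum_apply]

theorem mul_nthProduct_eq_sum_pullback (hr : ∀ x y z : A, μ x (y + z) = μ x y + μ x z)
    (n : ℕ) (a b c : ℤ → A) :
    (fun x : ℤ × ℤ => μ (c x.1) (NthProduct μ n a b x.2)) =
      ∑ j ∈ range (n + 1), ((-1 : ℤ) ^ j * (n.choose j : ℤ)) •
        pullback (fun x : ℤ × ℤ => (x.1, (n - j : ℤ), x.2 + j)) (fun _ => AddMonoidHom.id A)
          (fun y => μ (c y.1) (μ (a y.2.1) (b y.2.2))) := by
  funext x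
  change mulLeft hr (c x.1) (NthProduct μ n a b x.2) = _
  simp [NthProduct, map_sum, map_zsmul, Finset.sum_apply]

theorem isLocalPair_nthProduct_left (hl : ∀ x y z : A, μ (x + y) z = μ x z + μ y z)
    (hr : ∀ x y z : A, μ x (y + z) = μ x y + μ x z)
    (hperm : ∀ x y z : A, μ (μ x y) z = μ y (μ x z)) {a b c : ℤ → A}
    (hab : IsLocalPair μ a b) (hac : IsLocalPair μ a c) (n : ℕ) :
    IsLocalPair μ (NthProduct μ n a b) c := by
  obtain ⟨N₁, hab⟩ := (isLocalPair_iff μ a b).1 hab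
  obtain ⟨N₂, hac⟩ := (isLocalPair_iff μ a c).1 hac
  set g : ℤ × ℤ × ℤ → A := fun y => μ (μ (a y.1) (b y.2.1)) (c y.2.2)
  have hg₁₂ : ((shift (1, 0, 0) - shift (0, 1, 0) : Module.End ℤ (ℤ × ℤ × ℤ → A)) ^ N₁) g = 0 :=
    shift_sub_shift_pow_pullback_eq_zero (π := fun y : ℤ × ℤ × ℤ => (y.1, y.2.1))
      (L := fun y => mulRight hl (c y.2.2)) (by simp) (by simp) (by simp) (by simp) hab
  have hg₁₃ : ((shift (1, 0, 0) - shift (0, 0, 1) : Module.End ℤ (ℤ × ℤ × ℤ → A)) ^ N₂) g = 0 := by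
    have : g = pullback (fun y : ℤ × ℤ × ℤ => (y.1, y.2.2)) (fun y => mulLeft hr (b y.2.1))
        (fun x => μ (a x.1) (c x.2)) := funext fun y => hperm _ _ _
    rw [this]
    exact shift_sub_shift_pow_pullback_eq_zero (by simp) (by simp) (by simp) (by simp) hac
  have hg₂₃ : ((shift (0, 1, 0) - shift (0, 0, 1) : Module.End ℤ (ℤ × ℤ × ℤ → A)) ^
      (N₂ + N₁ - 1)) g = 0 := by
    rw [← sub_sub_sub_cancel_left _ _ (shift (1, 0, 0))]
    exact Module.End.sub_pow_apply_eq_zero_of_commute (commute_shift_sub_shift _ _ _ _) hg₁₃ hg₁₂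
  refine (isLocalPair_iff _ _ _).2 ⟨N₂ + N₁ - 1, ?_⟩
  rw [nthProduct_mul_eq_sum_pullback hl, map_sum]
  refine sum_eq_zero fun j _ => ?_
  rw [map_zsmul, shift_sub_shift_pow_pullback_eq_zero (by simp [add_right_comm]) (by simp)
    (by simp) (by simp) hg₂₃, smul_zero]

theorem isLocalPair_nthProduct_right (hl : ∀ x y z : A, μ (x + y) z = μ x z + μ y z)
    (hr : ∀ x y z : A, μ x (y + z) = μ x y + μ x z)
    (hassoc : ∀ x y z : A, μ (μ x y) z = μ x (μ y z)) {a b c : ℤ → A}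
    (hab : IsLocalPair μ a b) (hca : IsLocalPair μ c a) (n : ℕ) :
    IsLocalPair μ c (NthProduct μ n a b) := by
  obtain ⟨N₁, hab⟩ := (isLocalPair_iff μ a b).1 hab
  obtain ⟨N₂, hca⟩ := (isLocalPair_iff μ c a).1 hca
  set g : ℤ × ℤ × ℤ → A := fun y => μ (c y.1) (μ (a y.2.1) (b y.2.2))
  have hg₁₂ : ((shift (1, 0, 0) - shift (0, 1, 0) : Module.End ℤ (ℤ × ℤ × ℤ → A)) ^ N₂) g = 0 := by
    have : g = pullback (fun y : ℤ × ℤ × ℤ => (y.1, y.2.1)) (fun y => mulRight hl (b y.2.2))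
        (fun x => μ (c x.1) (a x.2)) := funext fun y => (hassoc _ _ _).symm
    rw [this]
    exact shift_sub_shift_pow_pullback_eq_zero (by simp) (by simp) (by simp) (by simp) hca
  have hg₂₃ : ((shift (0, 1, 0) - shift (0, 0, 1) : Module.End ℤ (ℤ × ℤ × ℤ → A)) ^ N₁) g = 0 :=
    shift_sub_shift_pow_pullback_eq_zero (π := fun y : ℤ × ℤ × ℤ => y.2)
      (L := fun y => mulLeft hr (c y.1)) (by simp) (by simp) (by simp) (by simp) hab
  have hg₁₃ : ((shift (1, 0, 0) - shift (0, 0, 1) : Module.End ℤ (ℤ × ℤ × ℤ → A)) ^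
      (N₂ + N₁ - 1)) g = 0 := by
    rw [← sub_add_sub_cancel _ (shift (0, 1, 0))]
    exact Module.End.add_pow_apply_eq_zero_of_commute (commute_shift_sub_shift _ _ _ _) hg₁₂ hg₂₃
  refine (isLocalPair_iff _ _ _).2 ⟨N₂ + N₁ - 1, ?_⟩
  rw [mul_nthProduct_eq_sum_pullback hr, map_sum]
  refine sum_eq_zero fun j _ => ?_
  rw [map_zsmul, shift_sub_shift_pow_pullback_eq_zero (by simp) (by simp [add_right_comm])
    (by simp) (by simp) hg₁₃, smul_zero]

end Product

end FormalDistribution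

theorem perm_dong_property_general (k : Type*) [Field k]
    (A : Type*) [AddCommGroup A] [Module k A]
    (μ : A → A → A) (hbil : IsBilinear k μ)
    (hassoc : ∀ x y z : A, μ (μ x y) z = μ x (μ y z))
    (hlcom : ∀ x y z : A, μ (μ x y) z = μ (μ y x) z)
    (a b c : ℤ → A) (hloc : PairwiseMutuallyLocal μ a b c) (n : ℕ) :
    IsLocalPair μ (NthProduct μ n a b) c ∧ IsLocalPair μ c (NthProduct μ n a b) := by
  obtain ⟨hab, -, hac, hca, -, -⟩ := hloc
  obtain ⟨hl, hr, -, -⟩ := hbil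
  have hperm : ∀ x y z : A, μ (μ x y) z = μ y (μ x z) := fun x y z =>
    (hlcom x y z).trans (hassoc y x z)
  exact ⟨FormalDistribution.isLocalPair_nthProduct_left hl hr hperm hab hac n,
    FormalDistribution.isLocalPair_nthProduct_right hl hr hassoc hab hca n⟩

/-- Perm algebras satisfy the Dong property. -/
theorem perm_dong_property (k : Type*) [Field k] [CharZero k]
    (A : Type*) [AddCommGroup A] [Module k A]
    (μ : A → A → A) (hbil : IsBilinear k μ)
    (hassoc : ∀ x y z : A, μ (μ x y) z = μ x (μ y z))
    (hlcom : ∀ x y z : A, μ (μ x y) z = μ (μ y x) z)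
    (a b c : ℤ → A) (hloc : PairwiseMutuallyLocal μ a b c) (n : ℕ) :
    IsLocalPair μ (NthProduct μ n a b) c ∧ IsLocalPair μ c (NthProduct μ n a b) :=
  perm_dong_property_general k A μ hbil hassoc hlcom a b c hloc n
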